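/- One cannot hear the shape of a disconnected planar drum: the disjoint union of the unit square and a right isosceles triangle with legs of length 2 is Dirichlet-isospectral to (but not congruent to) the disjoint union of a 1×2 rectangle and a right isosceles triangle with legs of length √2, both having Dirichlet spectrum {π²(m²+n²) : m,n ∈ ℕ₊} ∪ {π²((i/2)² + (j/2)²) : i,j ∈ ℕ₊, i > j} counted with multiplicity. -/

import Mathlib

open Real

private abbrev CP1 (E : ℝ) (p : ℕ × ℕ) : Prop :=
  1 ≤ p.1 ∧ 1 ≤ p.2 ∧ π ^ 2 * ((p.1 : ℝ) ^ 2 + (p.2 : ℝ) ^ 2) = E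

private abbrev CP2 (E : ℝ) (p : ℕ × ℕ) : Prop :=
  1 ≤ p.2 ∧ p.2 < p.1 ∧ π ^ 2 * ((p.1 : ℝ) ^ 2 + (p.2 : ℝ) ^ 2) / 4 = E

private abbrev CP3 (E : ℝ) (p : ℕ × ℕ) : Prop :=
  1 ≤ p.1 ∧ 1 ≤ p.2 ∧ π ^ 2 * ((p.1 : ℝ) ^ 2 + (p.2 : ℝ) ^ 2 / 4) = E

private abbrev CP4 (E : ℝ) (p : ℕ × ℕ) : Prop :=
  1 ≤ p.2 ∧ p.2 < p.1 ∧ π ^ 2 * ((p.1 : ℝ) ^ 2 + (p.2 : ℝ) ^ 2) / 2 = E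

private def gmap (E : ℝ) :
    {p : ℕ × ℕ // CP3 E p} ⊕ {p : ℕ × ℕ // CP4 E p} →
      {p : ℕ × ℕ // CP1 E p} ⊕ {p : ℕ × ℕ // CP2 E p}
  | .inl ⟨(m, n), h⟩ =>
      if hn : n % 2 = 0 then
        .inl ⟨(m, n / 2), by
          obtain ⟨hm, hn1, hE⟩ := h
          obtain ⟨k, rfl⟩ : ∃ k, n = 2 * k := ⟨n / 2, by omega⟩
          refine ⟨hm, by omega, ?_⟩
          rw [show 2 * k / 2 = k by omega]
          push_cast at hE ⊢
          linear_combination hE⟩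
      else if h2 : n < 2 * m then
        .inr ⟨(2 * m, n), by
          obtain ⟨hm, hn1, hE⟩ := h
          refine ⟨hn1, h2, ?_⟩
          push_cast at hE ⊢
          linear_combination hE⟩
      else
        .inr ⟨(n, 2 * m), by
          obtain ⟨hm, hn1, hE⟩ := h
          refine ⟨by omega, by omega, ?_⟩
          push_cast at hE ⊢
          linear_combination hE⟩
  | .inr ⟨(u, v), h⟩ =>
      .inr ⟨(u + v, u - v), by
        obtain ⟨hv, hvu, hE⟩ := h
        refine ⟨by omega, by omega, ?_⟩
        push_cast [Nat.cast_sub hvu.le] at hE ⊢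
        linear_combination hE⟩

private lemma gmap_inj (E : ℝ) : Function.Injective (gmap E) := by
  rintro (⟨⟨m, n⟩, h⟩ | ⟨⟨u, v⟩, h⟩) (⟨⟨m', n'⟩, h'⟩ | ⟨⟨u', v'⟩, h'⟩) heq
  · simp only [gmap] at heq
    split_ifs at heq with h1 h2 h3 h3 h2 h3 h3 <;>
      simp only [Sum.inl.injEq, Sum.inr.injEq, Subtype.mk.injEq, Prod.mk.injEq] at heq ⊢ <;>
      omega
  · have hv1 : 1 ≤ v' := h'.1
    have hv2 : v' < u' := h'.2.1
    simp only [gmap] at heq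
    split_ifs at heq with h1 h2 <;>
      simp only [Sum.inl.injEq, Sum.inr.injEq, Subtype.mk.injEq, Prod.mk.injEq] at heq
    · exfalso; omega
    · exfalso; omega
  · have hv1 : 1 ≤ v := h.1
    have hv2 : v < u := h.2.1
    simp only [gmap] at heq
    split_ifs at heq with h1 h2 <;>
      simp only [Sum.inl.injEq, Sum.inr.injEq, Subtype.mk.injEq, Prod.mk.injEq] at heq
    · exfalso; omega
    · exfalso; omega
  · have hv1 : 1 ≤ v := h.1
    have hv2 : v < u := h.2.1
    have hv1' : 1 ≤ v' := h'.1
    have hv2' : v' < u' := h'.2.1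
    simp only [gmap, Sum.inr.injEq, Subtype.mk.injEq, Prod.mk.injEq] at heq ⊢
    omega

private lemma gmap_surj (E : ℝ) : Function.Surjective (gmap E) := by
  rintro (⟨⟨m, n⟩, h⟩ | ⟨⟨i, j⟩, h⟩)
  · have hmem : CP3 E (m, 2 * n) := by
      obtain ⟨h1, h2, hE⟩ := h
      refine ⟨h1, by omega, ?_⟩
      push_cast at hE ⊢
      linear_combination hE
    refine ⟨.inl ⟨(m, 2 * n), hmem⟩, ?_⟩
    simp only [gmap]
    rw [dif_pos (by omega : 2 * n % 2 = 0)]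
    simp only [Sum.inl.injEq, Subtype.mk.injEq, Prod.mk.injEq]
    exact ⟨trivial, by omega⟩
  · have hj : 1 ≤ j := h.1
    have hji : j < i := h.2.1
    have hE : π ^ 2 * ((i : ℝ) ^ 2 + (j : ℝ) ^ 2) / 4 = E := h.2.2
    by_cases hp : i % 2 = j % 2
    · obtain ⟨u, v, hiu, hjv, h1v, hvu⟩ :
          ∃ u v, i = u + v ∧ j = u - v ∧ 1 ≤ v ∧ v < u :=
        ⟨(i + j) / 2, (i - j) / 2, by omega, by omega, by omega, by omega⟩
      have hmem : CP4 E (u, v) := by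
        refine ⟨h1v, hvu, ?_⟩
        have hi' : (i : ℝ) = (u : ℝ) + v := by rw [hiu]; push_cast; ring
        have hj' : (j : ℝ) = (u : ℝ) - v := by
          rw [hjv]; push_cast [Nat.cast_sub hvu.le]; ring
        rw [hi', hj'] at hE
        linear_combination hE
      refine ⟨.inr ⟨(u, v), hmem⟩, ?_⟩
      simp only [gmap, Sum.inr.injEq, Subtype.mk.injEq, Prod.mk.injEq]
      omega
    · by_cases hi2 : i % 2 = 0
      · obtain ⟨a, rfl⟩ : ∃ a, i = 2 * a := ⟨i / 2, by omega⟩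
        have hmem : CP3 E (a, j) := by
          refine ⟨by omega, hj, ?_⟩
          push_cast at hE ⊢
          linear_combination hE
        refine ⟨.inl ⟨(a, j), hmem⟩, ?_⟩
        simp only [gmap]
        rw [dif_neg (by omega : ¬ j % 2 = 0), dif_pos (by omega : j < 2 * a)]
      · obtain ⟨a, rfl⟩ : ∃ a, j = 2 * a := ⟨j / 2, by omega⟩
        have hmem : CP3 E (a, i) := by
          refine ⟨by omega, by omega, ?_⟩
          push_cast at hE ⊢
          linear_combination hE
        refine ⟨.inl ⟨(a, i), hmem⟩, ?_⟩
        simp only [gmap]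
        rw [dif_neg (by omega : ¬ i % 2 = 0), dif_neg (by omega : ¬ i < 2 * a)]

private lemma finite_of_bound {P : ℕ × ℕ → Prop} (N : ℕ)
    (h : ∀ p, P p → p.1 ≤ N ∧ p.2 ≤ N) : Finite {p : ℕ × ℕ // P p} := by
  have hsub : {p : ℕ × ℕ | P p} ⊆
      ↑((Finset.range (N + 1)) ×ˢ (Finset.range (N + 1))) := by
    intro p hp
    have := h p hp
    simp only [Finset.coe_product, Set.mem_prod, Finset.mem_coe, Finset.mem_range]
    omega
  exact (Set.Finite.subset (Finset.finite_toSet _) hsub).to_subtype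

private lemma bound_helper {a b E : ℝ} (ha : 1 ≤ a) (hb : 1 ≤ b)
    (h : π ^ 2 * (a ^ 2 + b ^ 2) / 4 ≤ E) : a ≤ E ∧ b ≤ E := by
  have h9 : (9 : ℝ) ≤ π ^ 2 := by nlinarith [Real.pi_gt_three]
  have hs : (0 : ℝ) ≤ a ^ 2 + b ^ 2 := by positivity
  have h0 : (0 : ℝ) ≤ (π ^ 2 - 9) * (a ^ 2 + b ^ 2) := by
    apply mul_nonneg <;> linarith
  have h1 : 9 * (a ^ 2 + b ^ 2) / 4 ≤ E := by nlinarith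
  constructor <;> nlinarith [sq_nonneg (a - 1), sq_nonneg (b - 1)]

private lemma chapman_key (E : ℝ) :
    Nat.card {p : ℕ × ℕ // CP1 E p} + Nat.card {p : ℕ × ℕ // CP2 E p}
      = Nat.card {p : ℕ × ℕ // CP3 E p} + Nat.card {p : ℕ × ℕ // CP4 E p} := by
  have f1 : Finite {p : ℕ × ℕ // CP1 E p} := by
    refine finite_of_bound ⌊E⌋₊ fun p hp => ?_
    obtain ⟨h1, h2, hE⟩ := hp
    have c1 : (1 : ℝ) ≤ p.1 := by exact_mod_cast h1
    have c2 : (1 : ℝ) ≤ p.2 := by exact_mod_cast h2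
    have hle : π ^ 2 * ((p.1 : ℝ) ^ 2 + (p.2 : ℝ) ^ 2) / 4 ≤ E := by
      nlinarith [sq_nonneg ((p.1 : ℝ)), sq_nonneg ((p.2 : ℝ)), Real.pi_gt_three]
    have hb := bound_helper c1 c2 hle
    exact ⟨Nat.le_floor hb.1, Nat.le_floor hb.2⟩
  have f2 : Finite {p : ℕ × ℕ // CP2 E p} := by
    refine finite_of_bound ⌊E⌋₊ fun p hp => ?_
    obtain ⟨h1, h2, hE⟩ := hp
    have c1 : (1 : ℝ) ≤ p.1 := by exact_mod_cast (by omega : 1 ≤ p.1)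
    have c2 : (1 : ℝ) ≤ p.2 := by exact_mod_cast h1
    have hb := bound_helper c1 c2 (le_of_eq hE)
    exact ⟨Nat.le_floor hb.1, Nat.le_floor hb.2⟩
  have f3 : Finite {p : ℕ × ℕ // CP3 E p} := by
    refine finite_of_bound ⌊E⌋₊ fun p hp => ?_
    obtain ⟨h1, h2, hE⟩ := hp
    have c1 : (1 : ℝ) ≤ p.1 := by exact_mod_cast h1
    have c2 : (1 : ℝ) ≤ p.2 := by exact_mod_cast h2
    have hle : π ^ 2 * ((p.1 : ℝ) ^ 2 + (p.2 : ℝ) ^ 2) / 4 ≤ E := by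
      nlinarith [sq_nonneg ((p.1 : ℝ)), Real.pi_gt_three]
    have hb := bound_helper c1 c2 hle
    exact ⟨Nat.le_floor hb.1, Nat.le_floor hb.2⟩
  have f4 : Finite {p : ℕ × ℕ // CP4 E p} := by
    refine finite_of_bound ⌊E⌋₊ fun p hp => ?_
    obtain ⟨h1, h2, hE⟩ := hp
    have c1 : (1 : ℝ) ≤ p.1 := by exact_mod_cast (by omega : 1 ≤ p.1)
    have c2 : (1 : ℝ) ≤ p.2 := by exact_mod_cast h1
    have hle : π ^ 2 * ((p.1 : ℝ) ^ 2 + (p.2 : ℝ) ^ 2) / 4 ≤ E := by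
      nlinarith [sq_nonneg ((p.1 : ℝ)), sq_nonneg ((p.2 : ℝ)), Real.pi_gt_three]
    have hb := bound_helper c1 c2 hle
    exact ⟨Nat.le_floor hb.1, Nat.le_floor hb.2⟩
  rw [← Nat.card_sum, ← Nat.card_sum]
  exact (Nat.card_congr (Equiv.ofBijective (gmap E) ⟨gmap_inj E, gmap_surj E⟩)).symm

/-- Chapman's disconnected isospectral pair: the disjoint union of the unit
square and a right isosceles triangle with legs 2 is Dirichlet-isospectral to,
but not congruent to, the disjoint union of a 1×2 rectangle and a right
isosceles triangle with legs √2.  Isospectrality (with multiplicity) is the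
statement that for every energy E, the number of eigenvalues equal to E of the
first union equals that of the second union, both being given by the multiset
{π²(m²+n²) : m,n ≥ 1} ∪ {π²((i/2)²+(j/2)²) : i > j ≥ 1}. -/

theorem chapman_isospectral_not_congruent
    (square triangle2 rect12 triangleSqrt2 A B : Set (EuclideanSpace ℝ (Fin 2)))
    (hsq : square = {x | 0 < x 0 ∧ x 0 < 1 ∧ 0 < x 1 ∧ x 1 < 1})
    (htri2 : triangle2 = {x | 0 < x 1 ∧ x 1 < x 0 - 2 ∧ x 0 - 2 < 2})
    (hrect : rect12 = {x | 0 < x 0 ∧ x 0 < 1 ∧ 0 < x 1 ∧ x 1 < 2})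
    (htriS : triangleSqrt2 = {x | 0 < x 1 ∧ x 1 < x 0 - 2 ∧ x 0 - 2 < Real.sqrt 2})
    (hA : A = square ∪ triangle2) (hB : B = rect12 ∪ triangleSqrt2) :
    -- isospectrality, counted with multiplicity:
    (∀ E : ℝ,
      Nat.card {p : ℕ × ℕ // 1 ≤ p.1 ∧ 1 ≤ p.2 ∧
          π ^ 2 * ((p.1 : ℝ) ^ 2 + (p.2 : ℝ) ^ 2) = E}
        + Nat.card {p : ℕ × ℕ // 1 ≤ p.2 ∧ p.2 < p.1 ∧
          π ^ 2 * ((p.1 : ℝ) ^ 2 + (p.2 : ℝ) ^ 2) / 4 = E}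
      = Nat.card {p : ℕ × ℕ // 1 ≤ p.1 ∧ 1 ≤ p.2 ∧
          π ^ 2 * ((p.1 : ℝ) ^ 2 + (p.2 : ℝ) ^ 2 / 4) = E}
        + Nat.card {p : ℕ × ℕ // 1 ≤ p.2 ∧ p.2 < p.1 ∧
          π ^ 2 * ((p.1 : ℝ) ^ 2 + (p.2 : ℝ) ^ 2) / 2 = E}) ∧
    -- both spectra are the multiset {π²(m²+n²)} ∪ {π²((i/2)²+(j/2)²), i > j}:
    (∀ E : ℝ,
      Nat.card {p : ℕ × ℕ // 1 ≤ p.1 ∧ 1 ≤ p.2 ∧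
          π ^ 2 * ((p.1 : ℝ) ^ 2 + (p.2 : ℝ) ^ 2) = E}
        + Nat.card {p : ℕ × ℕ // 1 ≤ p.2 ∧ p.2 < p.1 ∧
          π ^ 2 * (((p.1 : ℝ) / 2) ^ 2 + ((p.2 : ℝ) / 2) ^ 2) = E}
      = Nat.card {p : ℕ × ℕ // 1 ≤ p.1 ∧ 1 ≤ p.2 ∧
          π ^ 2 * ((p.1 : ℝ) ^ 2 + (p.2 : ℝ) ^ 2 / 4) = E}
        + Nat.card {p : ℕ × ℕ // 1 ≤ p.2 ∧ p.2 < p.1 ∧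
          π ^ 2 * ((p.1 : ℝ) ^ 2 + (p.2 : ℝ) ^ 2) / 2 = E}) ∧
    -- the two unions are not congruent:
    ¬ ∃ f : EuclideanSpace ℝ (Fin 2) ≃ᵢ EuclideanSpace ℝ (Fin 2), f '' A = B := by
  subst hsq htri2 hrect htriS hA hB
  refine ⟨fun E => chapman_key E, fun E => ?_, ?_⟩
  · have h2 : Nat.card {p : ℕ × ℕ // 1 ≤ p.2 ∧ p.2 < p.1 ∧
        π ^ 2 * (((p.1 : ℝ) / 2) ^ 2 + ((p.2 : ℝ) / 2) ^ 2) = E}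
        = Nat.card {p : ℕ × ℕ // CP2 E p} := by
      refine Nat.card_congr (Equiv.subtypeEquivRight fun p => ?_)
      constructor <;> rintro ⟨a, b, c⟩ <;> exact ⟨a, b, by linear_combination c⟩
    rw [h2]
    exact chapman_key E
  · rintro ⟨f, hf⟩
    set p : EuclideanSpace ℝ (Fin 2) := !₂[1/10, 1/10] with hp
    set q : EuclideanSpace ℝ (Fin 2) := !₂[39/10, 9/5] with hq
    have hp0 : p 0 = 1/10 := rfl
    have hp1 : p 1 = 1/10 := rfl
    have hq0 : q 0 = 39/10 := rfl
    have hq1 : q 1 = 9/5 := rfl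
    have hpA : p ∈ ({x : EuclideanSpace ℝ (Fin 2) | 0 < x 0 ∧ x 0 < 1 ∧ 0 < x 1 ∧ x 1 < 1} ∪
        {x | 0 < x 1 ∧ x 1 < x 0 - 2 ∧ x 0 - 2 < 2}) := by
      left
      show 0 < p 0 ∧ p 0 < 1 ∧ 0 < p 1 ∧ p 1 < 1
      rw [hp0, hp1]; norm_num
    have hqA : q ∈ ({x : EuclideanSpace ℝ (Fin 2) | 0 < x 0 ∧ x 0 < 1 ∧ 0 < x 1 ∧ x 1 < 1} ∪
        {x | 0 < x 1 ∧ x 1 < x 0 - 2 ∧ x 0 - 2 < 2}) := by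
      right
      show 0 < q 1 ∧ q 1 < q 0 - 2 ∧ q 0 - 2 < 2
      rw [hq0, hq1]; norm_num
    have hs2 : Real.sqrt 2 < 3/2 := by
      nlinarith [Real.sq_sqrt (by norm_num : (0:ℝ) ≤ 2), Real.sqrt_nonneg 2]
    have hs0 : (0:ℝ) ≤ Real.sqrt 2 := Real.sqrt_nonneg 2
    have hbound : ∀ x ∈ ({x : EuclideanSpace ℝ (Fin 2) | 0 < x 0 ∧ x 0 < 1 ∧ 0 < x 1 ∧ x 1 < 2} ∪
        {x | 0 < x 1 ∧ x 1 < x 0 - 2 ∧ x 0 - 2 < Real.sqrt 2}),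
        0 < x 0 ∧ x 0 < 2 + Real.sqrt 2 ∧ 0 < x 1 ∧ x 1 < 2 := by
      rintro x (⟨h1, h2, h3, h4⟩ | ⟨h1, h2, h3⟩)
      · exact ⟨h1, by linarith, h3, h4⟩
      · exact ⟨by linarith, by linarith, h1, by linarith⟩
    have hu := hbound (f p) (hf ▸ Set.mem_image_of_mem f hpA)
    have hv := hbound (f q) (hf ▸ Set.mem_image_of_mem f hqA)
    have hdist : dist p q = dist (f p) (f q) := (f.dist_eq p q).symm
    rw [EuclideanSpace.dist_eq, EuclideanSpace.dist_eq] at hdist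
    simp only [Fin.sum_univ_two, Real.dist_eq, sq_abs] at hdist
    rw [hp0, hp1, hq0, hq1] at hdist
    have hlt : (f p 0 - f q 0) ^ 2 + (f p 1 - f q 1) ^ 2 <
        (1/10 - 39/10 : ℝ) ^ 2 + (1/10 - 9/5 : ℝ) ^ 2 := by
      obtain ⟨a1, a2, a3, a4⟩ := hu
      obtain ⟨b1, b2, b3, b4⟩ := hv
      nlinarith [Real.sq_sqrt (by norm_num : (0:ℝ) ≤ 2)]
    have : Real.sqrt ((f p 0 - f q 0) ^ 2 + (f p 1 - f q 1) ^ 2) <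
        Real.sqrt ((1/10 - 39/10 : ℝ) ^ 2 + (1/10 - 9/5 : ℝ) ^ 2) :=
      Real.sqrt_lt_sqrt (by positivity) hlt
    linarith [hdist, this]
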